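/- arXiv:2605.04413 — 2 statements merged into one kernel-verified Lean document; each statement's English description precedes it below -/
import Mathlib

section
/- Define two SCMs over ℝ²: M with X = U_X, Y = sgn(X)·U_Y, and M' with X = U_X', Y = U_Y', where (U_X, U_Y) and (U_X', U_Y') are pairs of independent standard Gaussian random variables and sgn(x) = 1 for x ≥ 0, −1 for x < 0. Then the joint distributions of (X, Y) under M and M' are equal. -/
open MeasureTheory ProbabilityTheory

/-- sgn(x) = 1 for x ≥ 0, −1 for x < 0. -/
noncomputable def sgn (x : ℝ) : ℝ := if 0 ≤ x then 1 else -1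

lemma measurable_sgn : Measurable sgn := by
  unfold sgn
  exact Measurable.ite measurableSet_Ici measurable_const measurable_const

lemma sgn_mul_map (x : ℝ) :
    Measure.map (fun y : ℝ => sgn x * y) (gaussianReal 0 1) = gaussianReal 0 1 := by
  rw [gaussianReal_map_const_mul (sgn x)]
  have h : sgn x = 1 ∨ sgn x = -1 := by unfold sgn; split <;> simp
  rcases h with h | h <;> simp [h]

/-- The non-monotone SCM `X = U_X, Y = sgn(X)·U_Y` and the trivial SCM
`X = U_X', Y = U_Y'` induce the same observational joint distribution when the
exogenous law is the standard 2-dimensional Gaussian product measure. -/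
theorem observational_equivalence_sign_flip :
    Measure.map (fun u : ℝ × ℝ => (u.1, sgn u.1 * u.2))
        ((gaussianReal 0 1).prod (gaussianReal 0 1))
      = Measure.map (fun u : ℝ × ℝ => (u.1, u.2))
        ((gaussianReal 0 1).prod (gaussianReal 0 1)) := by
  set μ := gaussianReal 0 1
  have hf : Measurable (fun u : ℝ × ℝ => (u.1, sgn u.1 * u.2)) :=
    measurable_fst.prodMk ((measurable_sgn.comp measurable_fst).mul measurable_snd)
  have hid : Measure.map (fun u : ℝ × ℝ => (u.1, u.2)) (μ.prod μ) = μ.prod μ := by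
    rw [show (fun u : ℝ × ℝ => (u.1, u.2)) = id from rfl, Measure.map_id]
  rw [hid]
  haveI : IsProbabilityMeasure (Measure.map (fun u : ℝ × ℝ => (u.1, sgn u.1 * u.2)) (μ.prod μ)) := Measure.isProbabilityMeasure_map hf.aemeasurable
  refine (Measure.prod_eq (fun s t hs ht => ?_)).symm
  rw [Measure.map_apply hf (hs.prod ht), Measure.prod_apply (hf (hs.prod ht))]
  have : ∀ x : ℝ, μ (Prod.mk x ⁻¹' ((fun u : ℝ × ℝ => (u.1, sgn u.1 * u.2)) ⁻¹' s ×ˢ t))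
      = s.indicator (fun _ => μ t) x := by
    intro x
    by_cases hx : x ∈ s
    · have hpre : (Prod.mk x ⁻¹' ((fun u : ℝ × ℝ => (u.1, sgn u.1 * u.2)) ⁻¹' s ×ˢ t))
          = (fun y : ℝ => sgn x * y) ⁻¹' t := by
        ext y; simp [Set.mem_preimage, hx]
      rw [hpre, Set.indicator_of_mem hx]
      rw [← Measure.map_apply (by exact (measurable_const.mul measurable_id)) ht, sgn_mul_map]
    · have hpre : (Prod.mk x ⁻¹' ((fun u : ℝ × ℝ => (u.1, sgn u.1 * u.2)) ⁻¹' s ×ˢ t))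
          = ∅ := by
        ext y; simp [Set.mem_preimage, hx]
      rw [hpre, Set.indicator_of_notMem hx]
      simp
  simp_rw [this]
  rw [lintegral_indicator hs]
  simp [mul_comm]
end

section
/- Let d ≥ 1 and suppose triangular mechanisms f_i satisfy mechanism-wise invertibility, and let M' be a second shared-order triangular model with mechanism-wise invertible mechanisms f_i'. If for every i there is a bijection ψ_i with f_i'(v_{<i}, ψ_i(u_i)) = f_i(v_{<i}, u_i) for all contexts, then for any intervention set A ⊆ {1,…,d} with values a = (a_j)_{j∈A}, the post-intervention solution maps Γ_M^{do(A=a)} and Γ_{M'}^{do(A=a)} (defined by replacing equation j by the constant a_j for j ∈ A) satisfy Γ_{M'}^{do(A=a)} ∘ ψ = Γ_M^{do(A=a)}, where ψ = (ψ_1, …, ψ_d). -/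
/-- Coordinate-wise mechanism compatibility through an exogenous isomorphism
ψ is preserved by every hard intervention do(V_A = a): the post-intervention
solution maps of the two models commute through ψ. -/
theorem intervention_solution_maps_commute
    {d : ℕ} {U U' V : Fin d → Type*}
    (f : ∀ i : Fin d, ((∀ j : Fin d, j < i → V j) → U i → V i))
    (f' : ∀ i : Fin d, ((∀ j : Fin d, j < i → V j) → U' i → V i))
    (hf : ∀ (i : Fin d) (ctx : ∀ j : Fin d, j < i → V j),
      Function.Bijective (f i ctx))
    (hf' : ∀ (i : Fin d) (ctx : ∀ j : Fin d, j < i → V j),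
      Function.Bijective (f' i ctx))
    (ψ : ∀ i : Fin d, U i ≃ U' i)
    (hcompat : ∀ (i : Fin d) (ctx : ∀ j : Fin d, j < i → V j) (u : U i),
      f' i ctx (ψ i u) = f i ctx u)
    (A : Set (Fin d)) [DecidablePred (· ∈ A)] (a : ∀ j : Fin d, V j)
    (G : (∀ i, U i) → (∀ i, V i)) (G' : (∀ i, U' i) → (∀ i, V i))
    (hG : ∀ (u : ∀ i, U i) (i : Fin d),
      G u i = if i ∈ A then a i else f i (fun j _ => G u j) (u i))
    (hG' : ∀ (u' : ∀ i, U' i) (i : Fin d),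
      G' u' i = if i ∈ A then a i else f' i (fun j _ => G' u' j) (u' i)) :
    ∀ u : ∀ i, U i, G' (fun i => ψ i (u i)) = G u := by
  intro u
  have key : ∀ n : ℕ, ∀ i : Fin d, i.val < n → G' (fun k => ψ k (u k)) i = G u i := by
    intro n
    induction n with
    | zero => intro i h; omega
    | succ n ih =>
      intro i hi
      rw [hG, hG']
      split_ifs with h
      · rfl
      · have hctx : (fun j (_ : j < i) => G' (fun k => ψ k (u k)) j)
            = fun j (_ : j < i) => G u j := by
          funext j hj; exact ih j (by omega)
        rw [hctx, hcompat]
  funext i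
  exact key (i.val + 1) i (by omega)
end
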